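/- The unique word generated by the grammar Γ_N describes a correct solution of the Tower of Hanoi: executing its moves in order, starting from the state with all N discs on peg 1, every move is legal (a disc is never placed on a smaller disc) and the final state has all N discs on peg 3. -/

import Mathlib

/-- Symbols of the grammar `Γ_N`: terminals `p i j` ("move the top disc from
peg `i` to peg `j`") and nonterminals `h i j n`.  Pegs are `Fin 3`
(`0` = peg 1, `1` = peg 2, `2` = peg 3). -/
inductive GSym where
  | p : Fin 3 → Fin 3 → GSym
  | h : Fin 3 → Fin 3 → ℕ → GSym
deriving DecidableEq

/-- One-step rewriting in `Γ_N`: the productions are `h_ij(1) → p_ij` and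
`h_ij(n) → h_ik(n-1) p_ij h_kj(n-1)` for `2 ≤ n ≤ N`, `{i,j,k} = {1,2,3}`,
applied inside an arbitrary context. -/
inductive GStep (N : ℕ) : List GSym → List GSym → Prop
  | base (α β : List GSym) (i j : Fin 3) (hij : i ≠ j) :
      GStep N (α ++ GSym.h i j 1 :: β) (α ++ GSym.p i j :: β)
  | expand (α β : List GSym) (i j k : Fin 3) (n : ℕ)
      (hij : i ≠ j) (hjk : j ≠ k) (hki : k ≠ i) (h2 : 2 ≤ n) (hN : n ≤ N) :
      GStep N (α ++ GSym.h i j n :: β)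
        (α ++ GSym.h i k (n - 1) :: GSym.p i j :: GSym.h k j (n - 1) :: β)

/-- A word is terminal if it consists only of terminal symbols `p i j`. -/
def Terminal (w : List GSym) : Prop := ∀ s ∈ w, ∃ i j, s = GSym.p i j

/-- `L(Γ_N)`: terminal words derivable from the start symbol `h_13(N)`. -/
def Lang (N : ℕ) : Set (List GSym) :=
  { w | Terminal w ∧ Relation.ReflTransGen (GStep N) [GSym.h 0 2 N] w }

/- Pegs are `Fin 3` (peg `0` = "peg 1", peg `1` = "peg 2", peg `2` = "peg 3").
Discs are `Fin N`, labelled by increasing size; a state assigns each disc to a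
peg (the stacking order is determined by size in any legal state). -/

/-- A move `(i, j)` is legal in state `S` if `i ≠ j`, peg `i` is nonempty with
smallest (top) disc `d`, and `d` is smaller than every disc on peg `j`. -/
def legalMove {N : ℕ} (S : Fin N → Fin 3) (m : Fin 3 × Fin 3) : Prop :=
  m.1 ≠ m.2 ∧ ∃ d, S d = m.1 ∧ (∀ e, S e = m.1 → d ≤ e) ∧ (∀ e, S e = m.2 → d < e)

open Classical in
/-- Executing a move transfers the smallest disc on the source peg (if any). -/
noncomputable def applyMove {N : ℕ} (S : Fin N → Fin 3) (m : Fin 3 × Fin 3) :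
    Fin N → Fin 3 :=
  if h : ∃ d, S d = m.1 ∧ ∀ e, S e = m.1 → d ≤ e then
    Function.update S h.choose m.2
  else S

noncomputable def applyMoves {N : ℕ} (S : Fin N → Fin 3) :
    List (Fin 3 × Fin 3) → (Fin N → Fin 3)
  | [] => S
  | m :: ms => applyMoves (applyMove S m) ms

/-- Every move in the list is legal in the state at which it is executed. -/
def legalSeq {N : ℕ} (S : Fin N → Fin 3) : List (Fin 3 × Fin 3) → Prop
  | [] => True
  | m :: ms => legalMove S m ∧ legalSeq (applyMove S m) ms

/-- Decode a terminal symbol `p i j` as the move `(i, j)`. -/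
def decode : GSym → Fin 3 × Fin 3
  | GSym.p i j => (i, j)
  | GSym.h i j _ => (i, j)

/-- The third peg. -/
def other (i j : Fin 3) : Fin 3 := -(i + j)

lemma other_eq (i j k : Fin 3) (hij : i ≠ j) (hjk : j ≠ k) (hki : k ≠ i) :
    k = other i j := by revert hij hjk hki; revert i j k; decide

lemma other_ne_left (i j : Fin 3) (hij : i ≠ j) : other i j ≠ i := by
  revert hij; revert i j; decide

lemma other_ne_right (i j : Fin 3) (hij : i ≠ j) : other i j ≠ j := by
  revert hij; revert i j; decide

/-- The canonical Hanoi word. -/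
def hwd (i j : Fin 3) : ℕ → List GSym
  | 0 => []
  | n + 1 => hwd i (other i j) n ++ GSym.p i j :: hwd (other i j) j n

/-- Full expansion of a symbol. -/
def V : GSym → List GSym
  | GSym.p i j => [GSym.p i j]
  | GSym.h i j n => hwd i j n

lemma step_bind {N : ℕ} {u v : List GSym} (h : GStep N u v) :
    u.flatMap V = v.flatMap V := by
  cases h with
  | base α β i j hij =>
      simp [List.flatMap_append, List.flatMap_cons, V, hwd]
  | expand α β i j k n hij hjk hki h2 hN =>
      obtain ⟨m, rfl⟩ : ∃ m, n = m + 1 := ⟨n - 1, (Nat.succ_pred_eq_of_pos (by omega)).symm⟩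
      have hk : k = other i j := other_eq i j k hij hjk hki
      subst hk
      simp [List.flatMap_append, List.flatMap_cons, V, hwd]

lemma rtg_bind {N : ℕ} {u v : List GSym}
    (h : Relation.ReflTransGen (GStep N) u v) : u.flatMap V = v.flatMap V := by
  induction h with
  | refl => rfl
  | tail _ hstep ih => exact ih.trans (step_bind hstep)

lemma terminal_bind {w : List GSym} (hw : Terminal w) : w.flatMap V = w := by
  induction w with
  | nil => rfl
  | cons s t ih =>
      obtain ⟨i, j, rfl⟩ := hw s (by simp)
      have : Terminal t := fun x hx => hw x (by simp [hx])
      simp [List.flatMap_cons, V, ih this]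

lemma applyMoves_append {N : ℕ} (S : Fin N → Fin 3) (l₁ l₂ : List (Fin 3 × Fin 3)) :
    applyMoves S (l₁ ++ l₂) = applyMoves (applyMoves S l₁) l₂ := by
  induction l₁ generalizing S with
  | nil => rfl
  | cons m ms ih => simp [applyMoves, ih]

lemma legalSeq_append {N : ℕ} (S : Fin N → Fin 3) (l₁ l₂ : List (Fin 3 × Fin 3)) :
    legalSeq S (l₁ ++ l₂) ↔ legalSeq S l₁ ∧ legalSeq (applyMoves S l₁) l₂ := by
  induction l₁ generalizing S with
  | nil => simp [legalSeq, applyMoves]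
  | cons m ms ih => simp [legalSeq, applyMoves, ih, and_assoc]

lemma applyMove_eq {N : ℕ} (S : Fin N → Fin 3) (i j : Fin 3) (m : Fin N)
    (hm : S m = i) (hmin : ∀ e, S e = i → m ≤ e) :
    applyMove S (i, j) = Function.update S m j := by
  have h : ∃ d, S d = (i, j).1 ∧ ∀ e, S e = (i, j).1 → d ≤ e := ⟨m, hm, hmin⟩
  have hspec := h.choose_spec
  have : h.choose = m := le_antisymm (hspec.2 m hm) (hmin _ hspec.1)
  rw [applyMove, dif_pos h, this]

lemma hwd_correct {N : ℕ} : ∀ (n : ℕ) (i j : Fin 3), i ≠ j → n ≤ N →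
    ∀ S : Fin N → Fin 3, (∀ d : Fin N, (d : ℕ) < n → S d = i) →
    legalSeq S ((hwd i j n).map decode) ∧
    applyMoves S ((hwd i j n).map decode) =
      fun d : Fin N => if (d : ℕ) < n then j else S d := by
  intro n
  induction n with
  | zero =>
      intro i j _ _ S _
      constructor
      · trivial
      · funext d; simp [applyMoves, hwd]
  | succ m ih =>
      intro i j hij hn S hS
      set k := other i j with hk
      have hki : k ≠ i := other_ne_left i j hij
      have hkj : k ≠ j := other_ne_right i j hij
      have hik : i ≠ k := hki.symm
      obtain ⟨L1, T1⟩ := ih i k hik (by omega) S (fun d hd => hS d (by omega))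
      set T := applyMoves S ((hwd i k m).map decode) with hT
      have hmN : m < N := by omega
      set dm : Fin N := ⟨m, hmN⟩ with hdm
      have hTdm : T dm = i := by
        rw [T1]; simp only [hdm]
        rw [if_neg (by simp)]
        exact hS dm (by simp [hdm])
      have hTmin : ∀ e, T e = i → dm ≤ e := by
        intro e he
        rw [T1] at he; dsimp only at he
        by_cases h : (e : ℕ) < m
        · rw [if_pos h] at he; exact absurd he hki
        · exact Fin.mk_le_of_le_val (by omega)
      have hTj : ∀ e, T e = j → dm < e := by
        intro e he
        rw [T1] at he; dsimp only at he
        by_cases h : (e : ℕ) < m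
        · rw [if_pos h] at he; exact absurd he hkj
        · rw [if_neg h] at he
          rcases Nat.lt_or_ge (m : ℕ) e with h' | h'
          · exact h'
          · have heq : e = dm := Fin.ext (show (e : ℕ) = m by omega)
            rw [heq, hS dm (by simp [hdm])] at he
            exact absurd he hij
      have hAM : applyMove T (i, j) = Function.update T dm j :=
        applyMove_eq T i j dm hTdm hTmin
      set U := Function.update T dm j with hU
      have hUk : ∀ d : Fin N, (d : ℕ) < m → U d = k := by
        intro d hd
        have hne : d ≠ dm := by
          intro h; subst h; simp [hdm] at hd
        rw [hU, Function.update_of_ne hne, T1]; dsimp only; rw [if_pos hd]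
      obtain ⟨L2, T2⟩ := ih k j hkj (by omega) U hUk
      have hword : (hwd i j (m + 1)).map decode =
          (hwd i k m).map decode ++ (i, j) :: (hwd k j m).map decode := by
        simp [hwd, decode, hk]
      constructor
      · rw [hword, legalSeq_append, ← hT]
        refine ⟨L1, ⟨hij, dm, hTdm, hTmin, hTj⟩, ?_⟩
        rw [hAM]; exact L2
      · rw [hword, applyMoves_append, ← hT]
        show applyMoves (applyMove T (i,j)) ((hwd k j m).map decode) = _
        rw [hAM, T2]
        funext d
        by_cases h1 : (d : ℕ) < m
        · rw [if_pos h1, if_pos (show (d:ℕ) < m + 1 by omega)]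
        · rw [if_neg h1]
          by_cases h2 : (d : ℕ) < m + 1
          · have : d = dm := Fin.ext (show (d : ℕ) = m by omega)
            subst this
            rw [if_pos h2, hU, Function.update_self]
          · rw [if_neg h2, hU]
            have hne : d ≠ dm := by
              intro h; subst h; simp [hdm] at h2
            rw [Function.update_of_ne hne, T1]; dsimp only; rw [if_neg h1]

/-- every word generated by `Γ_N` describes a correct solution of
the Tower of Hanoi: starting with all `N` discs on peg 1 (= `0`), all its
moves are legal and it ends with all `N` discs on peg 3 (= `2`). -/
theorem lang_word_solves_hanoi (N : ℕ) (hN : 1 ≤ N) (w : List GSym) (hw : w ∈ Lang N) :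
    legalSeq (fun _ : Fin N => (0 : Fin 3)) (w.map decode) ∧
    applyMoves (fun _ : Fin N => (0 : Fin 3)) (w.map decode) = fun _ => (2 : Fin 3) := by
  obtain ⟨hterm, hderiv⟩ := hw
  have hweq : w = hwd 0 2 N := by
    have h1 := rtg_bind hderiv
    rw [terminal_bind hterm] at h1
    rw [← h1]
    simp [List.flatMap_cons, V]
  subst hweq
  obtain ⟨L, T⟩ := hwd_correct (N := N) N 0 2 (by decide) le_rfl
    (fun _ : Fin N => (0 : Fin 3)) (fun d _ => rfl)
  refine ⟨L, ?_⟩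
  rw [T]
  funext d
  rw [if_pos d.isLt]
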